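/- arXiv:1910.09589 — 4 statements merged into one kernel-verified Lean document; each statement's English description precedes it below -/
import Mathlib

section
/- Under the biased sampling model where every clean subset is sampled with probability d and every contaminated subset with probability f, the entrywise L1 distance between the GraphSAC expected label-distribution matrix and the nominal one satisfies ‖P_G − P_N‖₁ = |L̄ᶜ_S| · f · ‖P_A − P_N‖₁; equivalently, with p_fa := (|L_S| / |L̄ᶜ_S|) · f, it holds that ‖P_G − P_N‖₁ = (|L̄ᶜ_S|² / |L_S|) · p_fa · ‖P_A − P_N‖₁. (Theorem 1) -/
open Finset

/-- The entrywise L1 norm of a real `N × C` matrix: the sum of the absolute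
values of its entries. -/
noncomputable def entryL1 {N C : ℕ} (Z : Matrix (Fin N) (Fin C) ℝ) : ℝ :=
  ∑ i, ∑ j, |Z i j|

lemma entryL1_smul {N C : ℕ} (a : ℝ) (Z : Matrix (Fin N) (Fin C) ℝ) :
    entryL1 (a • Z) = |a| * entryL1 Z := by
  simp [entryL1, abs_mul, Finset.mul_sum]

/-- **Theorem 1 (GraphSAC).** Under the biased sampling model where every clean
subset is sampled with probability `d` and every contaminated subset with
probability `f`, the entrywise L1 distance between the GraphSAC expected
label-distribution matrix `P_G` and the nominal one `P_N` satisfies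
`‖P_G − P_N‖₁ = |L̄ᶜ_S| · f · ‖P_A − P_N‖₁`; equivalently, with
`p_fa = (|L_S| / |L̄ᶜ_S|) · f`, it holds that
`‖P_G − P_N‖₁ = (|L̄ᶜ_S|² / |L_S|) · p_fa · ‖P_A − P_N‖₁`. -/
theorem graphsac_theorem1 {N C K S : ℕ}
    (hK : 1 ≤ K) (hS : 1 ≤ S) (hSNK : S ≤ N - K)
    (A : Finset (Fin N)) (hA : A.card = K)
    (g : Finset (Fin N) → Matrix (Fin N) (Fin C) ℝ)
    (d f : ℝ) (hd : 0 ≤ d) (hf : 0 ≤ f)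
    (LS LbarS LbarcS : Finset (Finset (Fin N)))
    (hLS : LS = Finset.powersetCard S (Finset.univ : Finset (Fin N)))
    (hLbarS : LbarS = LS.filter (fun L => L ∩ A = ∅))
    (hLbarcS : LbarcS = LS \ LbarS)
    (hnorm : (LbarS.card : ℝ) * d + (LbarcS.card : ℝ) * f = 1)
    (PG PN PA : Matrix (Fin N) (Fin C) ℝ)
    (hPG : PG = d • ∑ L ∈ LbarS, g L + f • ∑ L ∈ LbarcS, g L)
    (hPN : PN = ((LbarS.card : ℝ))⁻¹ • ∑ L ∈ LbarS, g L)
    (hPA : PA = ((LbarcS.card : ℝ))⁻¹ • ∑ L ∈ LbarcS, g L) :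
    entryL1 (PG - PN) = (LbarcS.card : ℝ) * f * entryL1 (PA - PN) ∧
    entryL1 (PG - PN) =
      ((LbarcS.card : ℝ) ^ 2 / (LS.card : ℝ)) *
        (((LS.card : ℝ) / (LbarcS.card : ℝ)) * f) * entryL1 (PA - PN) := by
  -- LbarS is nonempty
  have hAcard : (Finset.univ \ A).card = N - K := by
    rw [Finset.card_sdiff_of_subset (Finset.subset_univ A), hA, Finset.card_univ, Fintype.card_fin]
  obtain ⟨L₀, hL₀sub, hL₀card⟩ :=
    Finset.exists_subset_card_eq (hAcard ▸ hSNK : S ≤ (Finset.univ \ A).card)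
  have hL₀ : L₀ ∈ LbarS := by
    rw [hLbarS, hLS]
    simp only [Finset.mem_filter, Finset.mem_powersetCard]
    refine ⟨⟨Finset.subset_univ _, hL₀card⟩, ?_⟩
    rw [← Finset.disjoint_iff_inter_eq_empty]
    exact Finset.disjoint_left.mpr fun x hx => (Finset.mem_sdiff.mp (hL₀sub hx)).2
  have hB : (0 : ℝ) < (LbarS.card : ℝ) := by
    exact_mod_cast Finset.card_pos.mpr ⟨L₀, hL₀⟩
  have hBne : (LbarS.card : ℝ) ≠ 0 := ne_of_gt hB
  -- key identity
  have key : PG - PN = ((LbarcS.card : ℝ) * f) • (PA - PN) := by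
    rcases eq_or_ne LbarcS.card 0 with hc | hc
    · have hempty : LbarcS = ∅ := Finset.card_eq_zero.mp hc
      have hd1 : d = ((LbarS.card : ℝ))⁻¹ := by
        rw [hempty] at hnorm
        simp at hnorm
        field_simp
        linarith
      rw [hPG, hPN, hempty, hd1]
      simp
    · have hcne : ((LbarcS.card : ℝ)) ≠ 0 := by exact_mod_cast hc
      have hdval : d = (1 - (LbarcS.card : ℝ) * f) / (LbarS.card : ℝ) := by
        field_simp
        linarith
      rw [hPG, hPN, hPA, hdval]
      match_scalars <;> field_simp <;> ring
  have h1 : entryL1 (PG - PN) = (LbarcS.card : ℝ) * f * entryL1 (PA - PN) := by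
    rw [key, entryL1_smul, abs_of_nonneg (by positivity)]
  refine ⟨h1, ?_⟩
  rcases eq_or_ne LbarcS.card 0 with hc | hc
  · rw [h1, hc]
    simp
  · have hcne : ((LbarcS.card : ℝ)) ≠ 0 := by exact_mod_cast hc
    have hLSne : ((LS.card : ℝ)) ≠ 0 := by
      have : LbarcS.card ≤ LS.card := Finset.card_le_card (hLbarcS ▸ Finset.sdiff_subset)
      have h2 : 0 < LS.card := lt_of_lt_of_le (Nat.pos_of_ne_zero hc) this
      positivity
    rw [h1]
    field_simp
end

section
/- Let X_1, …, X_I be independent and identically distributed random N×C real matrices on a probability space, each almost surely having all entries in [0,1] and every row summing to 1. Let P_G = E[X_1] (entrywise expectation) and P̂_G = (1/I)·Σ_{i=1}^I X_i. Then the expected spectral-norm deviation satisfies E[‖P̂_G − P_G‖] ≤ √(2·N·log(N+C)/I) + 2·√N·log(N+C)/(3·I). (Theorem 2, expectation bound) -/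
open MeasureTheory ProbabilityTheory

/-!
The spectral norm is dominated by the Frobenius norm, so by Jensen's inequality the expected
spectral deviation is at most the square root of the expected squared Frobenius deviation, which
is the sum over entries of the mean squared errors of the entrywise sample means. An entry lies in
`[0, 1]`, so its variance is at most its mean `P a b`; by independence the sample mean of `I`
copies has mean squared error at most `P a b / I`. Since the rows of `P_G` sum to `1`, the total
is at most `N / I`, and `√(N / I)` is below the claimed bound because `2 log (N + C) ≥ 2 log 2 ≥ 1`.
-/

/-- The spectral norm (operator norm induced by the Euclidean norms) of a real
`m × n` matrix. -/
noncomputable def specNorm {m n : ℕ} (P : Matrix (Fin m) (Fin n) ℝ) : ℝ :=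
  ‖LinearMap.toContinuousLinearMap (Matrix.toEuclideanLin P)‖

noncomputable instance matrixMeasurableSpace {m n : ℕ} :
    MeasurableSpace (Matrix (Fin m) (Fin n) ℝ) :=
  inferInstanceAs (MeasurableSpace (Fin m → Fin n → ℝ))

lemma specNorm_le_sqrt_sum_sq {m n : ℕ} (M : Matrix (Fin m) (Fin n) ℝ) :
    specNorm M ≤ √(∑ a, ∑ b, M a b ^ 2) := by
  refine ContinuousLinearMap.opNorm_le_bound _ (Real.sqrt_nonneg _) fun x => ?_
  rw [LinearMap.coe_toContinuousLinearMap', EuclideanSpace.norm_eq, EuclideanSpace.norm_eq,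
    ← Real.sqrt_mul (by positivity), Finset.sum_mul]
  refine Real.sqrt_le_sqrt (Finset.sum_le_sum fun a _ => ?_)
  calc ‖Matrix.toEuclideanLin M x a‖ ^ 2 = (∑ b, M a b * x b) ^ 2 := by
        simp [Matrix.mulVec, dotProduct]
    _ ≤ (∑ b, M a b ^ 2) * ∑ b, ‖x b‖ ^ 2 := by
        simpa only [Real.norm_eq_abs, sq_abs] using Finset.sum_mul_sq_le_sq_mul_sq _ _ _

section Probability

variable {Ω : Type*} [MeasurableSpace Ω] {μ : Measure Ω}

lemma variance_le_integral_of_mem_Icc [IsProbabilityMeasure μ] {Y : Ω → ℝ}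
    (hY : AEStronglyMeasurable Y μ) (h01 : ∀ᵐ ω ∂μ, Y ω ∈ Set.Icc (0 : ℝ) 1) :
    variance Y μ ≤ ∫ ω, Y ω ∂μ := by
  have hY2 : MemLp Y 2 μ := memLp_of_bounded h01 hY 2
  refine (variance_le_expectation_sq hY).trans (integral_mono_ae hY2.integrable_sq
    (hY2.integrable one_le_two) ?_)
  filter_upwards [h01] with ω h
  simpa using pow_le_of_le_one h.1 h.2 two_ne_zero

lemma integral_sq_average_sub_le [IsFiniteMeasure μ] {ι : Type*} [Fintype ι] [Nonempty ι]
    {Y : ι → Ω → ℝ} (hY : ∀ i, MemLp (Y i) 2 μ)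
    (hindep : Pairwise fun i j => IndepFun (Y i) (Y j) μ) {m v : ℝ}
    (hmean : ∀ i, ∫ ω, Y i ω ∂μ = m) (hvar : ∀ i, variance (Y i) μ ≤ v) :
    ∫ ω, ((Fintype.card ι : ℝ)⁻¹ * ∑ i, Y i ω - m) ^ 2 ∂μ ≤ v / Fintype.card ι := by
  set c : ℝ := (Fintype.card ι : ℝ)⁻¹
  have hcard : (Fintype.card ι : ℝ) ≠ 0 := by positivity
  have hsum : MemLp (fun ω => ∑ i, Y i ω) 2 μ := memLp_finsetSum _ fun i _ => hY i
  have hmean_avg : ∫ ω, c * ∑ i, Y i ω ∂μ = m := by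
    rw [integral_const_mul, integral_finsetSum _ fun i _ => (hY i).integrable one_le_two]
    simp [c, hmean, hcard]
  have hvar_sum : variance (fun ω => ∑ i, Y i ω) μ = ∑ i, variance (Y i) μ := by
    rw [← Finset.sum_fn]
    exact IndepFun.variance_sum (fun i _ => hY i) fun i _ j _ hij => hindep hij
  calc ∫ ω, (c * ∑ i, Y i ω - m) ^ 2 ∂μ
      = variance (fun ω => c * ∑ i, Y i ω) μ := by
        rw [variance_eq_integral (hsum.const_mul c).aemeasurable, hmean_avg]
    _ = c ^ 2 * ∑ i, variance (Y i) μ := by rw [variance_const_mul, hvar_sum]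
    _ ≤ c ^ 2 * ∑ _i : ι, v := by gcongr with i; exact hvar i
    _ = v / Fintype.card ι := by
        simp only [c, inv_pow, Finset.sum_const, Finset.card_univ, nsmul_eq_mul]
        field_simp

lemma memLp_two_sqrt {g : Ω → ℝ} (hg : Integrable g μ) (hnn : 0 ≤ᵐ[μ] g) :
    MemLp (fun ω => √(g ω)) 2 μ := by
  refine (memLp_two_iff_integrable_sq
    (Real.continuous_sqrt.comp_aestronglyMeasurable hg.1)).2 (hg.congr ?_)
  filter_upwards [hnn] with ω h
  exact (Real.sq_sqrt h).symm

lemma integral_sqrt_le_sqrt_integral [IsProbabilityMeasure μ] {g : Ω → ℝ} (hg : Integrable g μ)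
    (hnn : 0 ≤ᵐ[μ] g) : ∫ ω, √(g ω) ∂μ ≤ √(∫ ω, g ω ∂μ) :=
  Real.strictConcaveOn_sqrt.concaveOn.le_map_integral Real.continuous_sqrt.continuousOn
    isClosed_Ici hnn hg ((memLp_two_sqrt hg hnn).integrable one_le_two)

lemma integral_specNorm_le_sqrt_integral_sum_sq [IsProbabilityMeasure μ] {m n : ℕ}
    {D : Ω → Matrix (Fin m) (Fin n) ℝ} (hD : ∀ a b, MemLp (fun ω => D ω a b) 2 μ) :
    ∫ ω, specNorm (D ω) ∂μ ≤ √(∫ ω, ∑ a, ∑ b, D ω a b ^ 2 ∂μ) := by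
  have hint : Integrable (fun ω => ∑ a, ∑ b, D ω a b ^ 2) μ :=
    integrable_finsetSum _ fun a _ => integrable_finsetSum _ fun b _ => (hD a b).integrable_sq
  have hnn : 0 ≤ᵐ[μ] fun ω => ∑ a, ∑ b, D ω a b ^ 2 := .of_forall fun ω => by positivity
  calc ∫ ω, specNorm (D ω) ∂μ ≤ ∫ ω, √(∑ a, ∑ b, D ω a b ^ 2) ∂μ :=
        integral_mono_of_nonneg (.of_forall fun ω => norm_nonneg _)
          ((memLp_two_sqrt hint hnn).integrable one_le_two)
          (.of_forall fun ω => specNorm_le_sqrt_sum_sq (D ω))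
    _ ≤ √(∫ ω, ∑ a, ∑ b, D ω a b ^ 2 ∂μ) := integral_sqrt_le_sqrt_integral hint hnn

variable {ι m n : Type*} [Fintype ι] {X : ι → Ω → Matrix m n ℝ}

lemma memLp_average_sub_apply [IsFiniteMeasure μ] (hX : ∀ i a b, MemLp (fun ω => X i ω a b) 2 μ)
    (P : Matrix m n ℝ) (a : m) (b : n) :
    MemLp (fun ω => ((Fintype.card ι : ℝ)⁻¹ • ∑ i, X i ω - P) a b) 2 μ := by
  simp only [Matrix.sub_apply, Matrix.smul_apply, Matrix.sum_apply, smul_eq_mul]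
  exact ((memLp_finsetSum _ fun i _ => hX i a b).const_mul _).sub (memLp_const _)

lemma integral_sum_sq_average_sub_le [IsProbabilityMeasure μ] [Nonempty ι] [Fintype m] [Fintype n]
    (hX : ∀ i a b, MemLp (fun ω => X i ω a b) 2 μ)
    (hindep : ∀ a b, Pairwise fun i j => IndepFun (fun ω => X i ω a b) (fun ω => X j ω a b) μ)
    {P : Matrix m n ℝ} (hmean : ∀ i a b, ∫ ω, X i ω a b ∂μ = P a b)
    (h01 : ∀ i a b, ∀ᵐ ω ∂μ, X i ω a b ∈ Set.Icc (0 : ℝ) 1) :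
    ∫ ω, ∑ a, ∑ b, ((Fintype.card ι : ℝ)⁻¹ • ∑ i, X i ω - P) a b ^ 2 ∂μ ≤
      (∑ a, ∑ b, P a b) / Fintype.card ι := by
  have hsq a b := (memLp_average_sub_apply hX P a b).integrable_sq
  rw [integral_finsetSum _ fun a _ => integrable_finsetSum _ fun b _ => hsq a b, Finset.sum_div]
  refine Finset.sum_le_sum fun a _ => ?_
  rw [integral_finsetSum _ fun b _ => hsq a b, Finset.sum_div]
  refine Finset.sum_le_sum fun b _ => ?_
  simp only [Matrix.sub_apply, Matrix.smul_apply, Matrix.sum_apply, smul_eq_mul]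
  refine integral_sq_average_sub_le (fun i => hX i a b) (hindep a b) (hmean · a b) fun i => ?_
  rw [← hmean i a b]
  exact variance_le_integral_of_mem_Icc (hX i a b).1 (h01 i a b)

end Probability

lemma sqrt_div_le_sqrt_two_mul_log_div_add {n c i : ℝ} (hn : 0 ≤ n) (hnc : 2 ≤ n + c)
    (hi : 0 ≤ i) :
    √(n / i) ≤ √(2 * n * Real.log (n + c) / i) + 2 * √n * Real.log (n + c) / (3 * i) := by
  have hlog : 1 ≤ 2 * Real.log (n + c) := by
    linarith [Real.log_le_log two_pos hnc, Real.log_two_gt_d9]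
  refine le_add_of_le_of_nonneg (Real.sqrt_le_sqrt (div_le_div_of_nonneg_right ?_ hi)) ?_
  · nlinarith [mul_le_mul_of_nonneg_left hlog hn]
  · exact div_nonneg (mul_nonneg (mul_nonneg zero_le_two (Real.sqrt_nonneg _)) (by linarith))
      (by linarith)

/-- **Theorem 2 (expectation bound).** Let `X_1, …, X_I` be i.i.d. random
`N × C` real matrices, each a.s. having all entries in `[0,1]` and every row
summing to `1`. With `P_G = E[X_1]` (entrywise) and
`P̂_G = (1/I)·Σ_{i=1}^I X_i`, the expected spectral-norm deviation satisfies
`E[‖P̂_G − P_G‖] ≤ √(2·N·log(N+C)/I) + 2·√N·log(N+C)/(3·I)`. -/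
theorem graphsac_theorem2_expectation {N C I : ℕ}
    (hN : 1 ≤ N) (hC : 1 ≤ C) (hI : 1 ≤ I)
    {Ω : Type*} [MeasurableSpace Ω] (μ : Measure Ω) [IsProbabilityMeasure μ]
    (X : Fin I → Ω → Matrix (Fin N) (Fin C) ℝ)
    (hmeas : ∀ i, Measurable (X i))
    (hindep : iIndepFun (m := fun _ => matrixMeasurableSpace) X μ)
    (hident : ∀ i, IdentDistrib (X i) (X ⟨0, hI⟩) μ μ)
    (hbound : ∀ᵐ ω ∂μ, ∀ i a b, X i ω a b ∈ Set.Icc (0 : ℝ) 1)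
    (hrow : ∀ᵐ ω ∂μ, ∀ i a, ∑ b, X i ω a b = 1)
    (PG : Matrix (Fin N) (Fin C) ℝ)
    (hPG : ∀ a b, PG a b = ∫ ω, X ⟨0, hI⟩ ω a b ∂μ)
    (Phat : Ω → Matrix (Fin N) (Fin C) ℝ)
    (hPhat : ∀ ω, Phat ω = (I : ℝ)⁻¹ • ∑ i, X i ω) :
    ∫ ω, specNorm (Phat ω - PG) ∂μ ≤
      Real.sqrt (2 * N * Real.log (N + C) / I) +
        2 * Real.sqrt N * Real.log (N + C) / (3 * I) := by
  have hentry (a : Fin N) (b : Fin C) : Measurable fun M : Matrix (Fin N) (Fin C) ℝ => M a b :=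
    (measurable_pi_apply b).comp (measurable_pi_apply a)
  have h01 i a b : ∀ᵐ ω ∂μ, X i ω a b ∈ Set.Icc (0 : ℝ) 1 := hbound.mono fun ω h => h i a b
  have hX i a b : MemLp (fun ω => X i ω a b) 2 μ :=
    memLp_of_bounded (h01 i a b) ((hentry a b).comp (hmeas i)).aestronglyMeasurable 2
  have hmean i a b : ∫ ω, X i ω a b ∂μ = PG a b := by
    rw [hPG]
    exact ((hident i).comp (hentry a b)).integral_eq
  have hPG_row a : ∑ b, PG a b = 1 := by
    simp_rw [← hmean ⟨0, hI⟩ a,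
      ← integral_finsetSum _ fun b _ => (hX ⟨0, hI⟩ a b).integrable one_le_two]
    simp [integral_congr_ae (hrow.mono fun ω h => h ⟨0, hI⟩ a)]
  have hPhat_avg : Phat = fun ω => (Fintype.card (Fin I) : ℝ)⁻¹ • ∑ i, X i ω := by
    simpa only [Fintype.card_fin] using funext hPhat
  subst hPhat_avg
  have : Nonempty (Fin I) := ⟨⟨0, hI⟩⟩
  calc ∫ ω, specNorm ((Fintype.card (Fin I) : ℝ)⁻¹ • ∑ i, X i ω - PG) ∂μ
      ≤ √(∫ ω, ∑ a, ∑ b, ((Fintype.card (Fin I) : ℝ)⁻¹ • ∑ i, X i ω - PG) a b ^ 2 ∂μ) :=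
        integral_specNorm_le_sqrt_integral_sum_sq (memLp_average_sub_apply hX PG)
    _ ≤ √((∑ a, ∑ b, PG a b) / Fintype.card (Fin I)) := Real.sqrt_le_sqrt <|
        integral_sum_sq_average_sub_le hX
          (fun a b _ _ hij => (hindep.indepFun hij).comp (hentry a b) (hentry a b)) hmean h01
    _ = √(N / I) := by simp [hPG_row]
    _ ≤ _ := sqrt_div_le_sqrt_two_mul_log_div_add (Nat.cast_nonneg N) (by norm_cast; omega)
        (Nat.cast_nonneg I)
end

section
/- The difference between the average label matrix over clean subsets and the average over contaminated subsets satisfies (1/|L̄_S|)·Σ_{L ∈ L̄_S} Y_L − (1/|L̄ᶜ_S|)·Σ_{L ∈ L̄ᶜ_S} Y_L = (f_A/|L̄ᶜ_S|) · ( (K/(N−K)) · Y_N − Y_A ), where f_A = C(N−1, S−1), Y_N is the N×C matrix whose n-th row equals y_n for n ∉ A and is zero otherwise, and Y_A is the N×C matrix whose n-th row equals y_n for n ∈ A and is zero otherwise. -/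
open Finset

/-!
Every node of a set `U` lies in exactly `C(#U - 1, S - 1)` of the `S`-subsets of `U`, so
summing `Y_L` over the `S`-subsets of `U` gives `C(#U - 1, S - 1) • Y_U`. The clean subsets
are the `S`-subsets of `Aᶜ`, so their sum is `C(N - K - 1, S - 1) • Y_N`, and the
contaminated sum is the total `C(N - 1, S - 1) • (Y_N + Y_A)` minus the clean one. What is
left is an identity between the coefficients, which follows from `m C(m - 1, S - 1) = S C(m, S)`
for `m = N - K` and `m = N`.
-/

namespace Nat

theorem mul_choose_sub_one (m : ℕ) {k : ℕ} (hk : 1 ≤ k) :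
    m * (m - 1).choose (k - 1) = k * m.choose k := by
  obtain ⟨k, rfl⟩ : ∃ j, k = j + 1 := ⟨k - 1, by omega⟩
  cases m with
  | zero => simp
  | succ m => simpa [mul_comm] using add_one_mul_choose_eq m k

theorem choose_lt_choose_of_lt {m n k : ℕ} (hk : 1 ≤ k) (hkm : k ≤ m) (hmn : m < n) :
    m.choose k < n.choose k := by
  obtain ⟨k, rfl⟩ : ∃ j, k = j + 1 := ⟨k - 1, by omega⟩
  calc m.choose (k + 1) < m.choose k + m.choose (k + 1) :=
        Nat.lt_add_of_pos_left (choose_pos (by omega))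
    _ = (m + 1).choose (k + 1) := (choose_succ_succ' m k).symm
    _ ≤ n.choose (k + 1) := choose_le_choose _ hmn

end Nat

section RowsOn

variable {ι κ R : Type*} [DecidableEq ι] [AddCommMonoid R]

/-- The matrix `Y_L` of the paper: the rows of `y` indexed by `L`, the other rows zero. -/
def rowsOn (y : ι → κ → R) (L : Finset ι) : Matrix ι κ R :=
  Matrix.of fun n c => if n ∈ L then y n c else 0

theorem sum_powersetCard_rowsOn (y : ι → κ → R) (U : Finset ι) {S : ℕ} (hS : 1 ≤ S) :
    ∑ L ∈ U.powersetCard S, rowsOn y L = (#U - 1).choose (S - 1) • rowsOn y U := by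
  ext n c
  simp only [Matrix.sum_apply, Matrix.smul_apply, rowsOn, Matrix.of_apply]
  rw [← sum_filter, sum_const]
  split_ifs with hn
  · have hcount := card_filter_powersetCard_subset {n} U S (by simpa) (by simpa)
    simp only [singleton_subset_iff, card_singleton] at hcount
    rw [hcount]
  · rw [filter_false_of_mem fun L hL => fun hnL => hn ((mem_powersetCard.1 hL).1 hnL),
      card_empty, zero_smul, smul_zero]

theorem rowsOn_univ [Fintype ι] (y : ι → κ → R) (A : Finset ι) :
    rowsOn y univ = rowsOn y Aᶜ + rowsOn y A := by
  ext n c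
  by_cases hn : n ∈ A <;> simp [rowsOn, hn]

theorem rowsOn_compl [Fintype ι] (y : ι → κ → R) (A : Finset ι) :
    rowsOn y Aᶜ = Matrix.of fun n c => if n ∈ A then 0 else y n c := by
  ext n c
  by_cases hn : n ∈ A <;> simp [rowsOn, hn]

end RowsOn

theorem powersetCard_compl_eq_filter_inter_eq_empty {α : Type*} [Fintype α] [DecidableEq α]
    (A : Finset α) (S : ℕ) :
    (powersetCard S univ).filter (fun L => L ∩ A = ∅) = powersetCard S Aᶜ := by
  ext L
  simp [subset_compl_iff_disjoint_right, disjoint_iff_inter_eq_empty, and_comm]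

/-- The final identity in terms of `a = C(m - 1, S - 1)`, `b = C(m, S)`, `f = C(N - 1, S - 1)`,
`M = C(N, S) - C(m, S)` and `N = m + k`. -/
theorem smul_sub_smul_eq_of_choose_relations {𝕜 V : Type*} [Field 𝕜] [AddCommGroup V]
    [Module 𝕜 V] {a b f M m k s : 𝕜} (hb : b ≠ 0) (hM : M ≠ 0) (hm : m ≠ 0)
    (ha : m * a = s * b) (hf : (m + k) * f = s * (M + b)) (YN YA : V) :
    b⁻¹ • (a • YN) - M⁻¹ • (f • (YN + YA) - a • YN) = (f / M) • ((k / m) • YN - YA) := by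
  have hcoeff : b⁻¹ * a - M⁻¹ * (f - a) = f / M * (k / m) := by
    field_simp
    linear_combination (M + b) * ha - b * hf
  linear_combination (norm := module) hcoeff • YN

/-- The difference between the average label matrix over clean subsets and the
average over contaminated subsets satisfies
`(1/|L̄_S|)·Σ_{L∈L̄_S} Y_L − (1/|L̄ᶜ_S|)·Σ_{L∈L̄ᶜ_S} Y_L
  = (f_A/|L̄ᶜ_S|) · ((K/(N−K))·Y_N − Y_A)`, where `f_A = C(N−1, S−1)`, `Y_N`
has `n`-th row `y_n` for `n ∉ A` (zero otherwise) and `Y_A` has `n`-th row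
`y_n` for `n ∈ A` (zero otherwise). -/
theorem graphsac_average_difference {N C K S : ℕ}
    (hK : 1 ≤ K) (hS : 1 ≤ S) (hSNK : S ≤ N - K)
    (A : Finset (Fin N)) (hA : A.card = K)
    (y : Fin N → Fin C → ℝ)
    (Y : Finset (Fin N) → Matrix (Fin N) (Fin C) ℝ)
    (hY : ∀ L, Y L = Matrix.of fun n c => if n ∈ L then y n c else 0)
    (LS LbarS LbarcS : Finset (Finset (Fin N)))
    (hLS : LS = Finset.powersetCard S (Finset.univ : Finset (Fin N)))
    (hLbarS : LbarS = LS.filter (fun L => L ∩ A = ∅))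
    (hLbarcS : LbarcS = LS \ LbarS)
    (YN YA : Matrix (Fin N) (Fin C) ℝ)
    (hYN : YN = Matrix.of fun n c => if n ∈ A then 0 else y n c)
    (hYA : YA = Matrix.of fun n c => if n ∈ A then y n c else 0) :
    ((LbarS.card : ℝ))⁻¹ • (∑ L ∈ LbarS, Y L) -
        ((LbarcS.card : ℝ))⁻¹ • (∑ L ∈ LbarcS, Y L) =
      (((N - 1).choose (S - 1) : ℝ) / (LbarcS.card : ℝ)) •
        (((K : ℝ) / ((N - K : ℕ) : ℝ)) • YN - YA) := by
  have hKN : K ≤ N := hA ▸ (card_le_univ A).trans_eq (Fintype.card_fin N)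
  obtain rfl : Y = rowsOn y := funext hY
  obtain rfl : YN = rowsOn y Aᶜ := hYN.trans (rowsOn_compl y A).symm
  obtain rfl : YA = rowsOn y A := hYA
  have hclean : LbarS = powersetCard S Aᶜ := by
    rw [hLbarS, hLS, powersetCard_compl_eq_filter_inter_eq_empty]
  have hsub : LbarS ⊆ LS := hLbarS ▸ filter_subset _ _
  have hcompl : #Aᶜ = N - K := by rw [card_compl, hA, Fintype.card_fin]
  have hcard_LS : #LS = N.choose S := by rw [hLS, card_powersetCard, card_fin]
  have hcard_clean : #LbarS = (N - K).choose S := by rw [hclean, card_powersetCard, hcompl]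
  have hcard_split : #LbarcS + #LbarS = #LS := hLbarcS ▸ card_sdiff_add_card_eq_card hsub
  have hsum_all : ∑ L ∈ LS, rowsOn y L = (N - 1).choose (S - 1) • (rowsOn y Aᶜ + rowsOn y A) := by
    rw [hLS, sum_powersetCard_rowsOn y _ hS, card_fin, rowsOn_univ y A]
  have hsum_clean : ∑ L ∈ LbarS, rowsOn y L = (N - K - 1).choose (S - 1) • rowsOn y Aᶜ := by
    rw [hclean, sum_powersetCard_rowsOn y _ hS, hcompl]
  rw [hLbarcS, sum_sdiff_eq_sub hsub, ← hLbarcS, hsum_all, hsum_clean,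
    ← Nat.cast_smul_eq_nsmul ℝ, ← Nat.cast_smul_eq_nsmul ℝ]
  refine smul_sub_smul_eq_of_choose_relations (s := (S : ℝ)) ?_ ?_ ?_ ?_ ?_ _ _
  · exact_mod_cast hcard_clean ▸ (Nat.choose_pos hSNK).ne'
  · have := Nat.choose_lt_choose_of_lt hS hSNK (by omega : N - K < N)
    exact_mod_cast (by omega : #LbarcS ≠ 0)
  · exact_mod_cast (by omega : N - K ≠ 0)
  · rw [hcard_clean]
    exact_mod_cast Nat.mul_choose_sub_one (N - K) hS
  · rw [← Nat.cast_add, ← Nat.cast_add, Nat.sub_add_cancel hKN, hcard_split, hcard_LS]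
    exact_mod_cast Nat.mul_choose_sub_one N hS
end

section
/- For the diffusion-based SSL model with nonnegative diffusion columns and one-hot labels, the reverse triangle inequality yields the lower bound ‖P_N − P_A‖₁ ≥ (f_A/|L̄ᶜ_S|) · | Σ_{n' ∈ A} ‖h_{n'}‖₁ − (K/(N−K)) · Σ_{n ∉ A} ‖h_n‖₁ |, where f_A = C(N−1, S−1). -/
/-!
Each row of `Y_L` sums to `1` on `L` and vanishes off `L`, so the sum of all entries of
`g(L) = H Y_L` is `∑_{n ∈ L} ‖h_n‖₁`. Over all `S`-subsets every node is counted
`C(N-1, S-1)` times, over the clean ones every node outside `A` is counted `C(N-K-1, S-1)` times;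
this computes the entry sum of `P_N - P_A` exactly, and `S C(N, S) = N C(N-1, S-1)` turns it into
`-(f_A / |L̄ᶜ_S|) (∑_A ‖h‖₁ - K/(N-K) ∑_{Aᶜ} ‖h‖₁)`. The entrywise `L1` norm dominates the
absolute value of the entry sum.
-/

open Finset

namespace Matrix

variable {l m n R : Type*} [Fintype l] [Fintype m] [Fintype n] [Semiring R]

def entrySum : Matrix m n R →ₗ[R] R where
  toFun Z := ∑ i, ∑ j, Z i j
  map_add' Z W := by simp only [add_apply, sum_add_distrib]
  map_smul' r Z := by simp only [smul_apply, smul_eq_mul, mul_sum, RingHom.id_apply]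

theorem entrySum_apply (Z : Matrix m n R) : entrySum Z = ∑ i, ∑ j, Z i j := rfl

theorem entrySum_mul (M : Matrix l m R) (X : Matrix m n R) :
    entrySum (M * X) = ∑ j, (∑ i, M i j) * ∑ k, X j k := by
  simp only [entrySum_apply, mul_apply, sum_mul, mul_sum]
  simp_rw [sum_comm (s := (univ : Finset n)) (t := (univ : Finset m))]
  rw [sum_comm]
  exact sum_congr rfl fun _ _ => sum_comm

end Matrix

theorem abs_entrySum_le_entryL1 {N C : ℕ} (Z : Matrix (Fin N) (Fin C) ℝ) :
    |Matrix.entrySum Z| ≤ entryL1 Z :=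
  (Matrix.entrySum_apply Z ▸ abs_sum_le_sum_abs _ _).trans
    (sum_le_sum fun _ _ => abs_sum_le_sum_abs _ _)

section PowersetCard

variable {α : Type*} [DecidableEq α]

theorem Finset.sum_powersetCard_sum {M : Type*} [AddCommMonoid M] (s : Finset α) {k : ℕ}
    (hk : 1 ≤ k) (w : α → M) :
    ∑ L ∈ s.powersetCard k, ∑ x ∈ L, w x = (#s - 1).choose (k - 1) • ∑ x ∈ s, w x := by
  rw [sum_comm' (t' := s) (s' := fun x => {L ∈ s.powersetCard k | {x} ⊆ L}), smul_sum]
  · refine sum_congr rfl fun x hx => ?_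
    rw [sum_const, card_filter_powersetCard_subset _ _ _ (singleton_subset_iff.2 hx) hk,
      card_singleton]
  · intro L x
    simp only [mem_filter, mem_powersetCard, singleton_subset_iff]
    exact ⟨fun h => ⟨⟨h.1, h.2⟩, h.1.1 h.2⟩, fun h => ⟨h.1.1, h.1.2⟩⟩

theorem Finset.filter_inter_eq_empty_powersetCard_univ [Fintype α] (A : Finset α) (k : ℕ) :
    {L ∈ powersetCard k (univ : Finset α) | L ∩ A = ∅} = powersetCard k Aᶜ := by
  ext L
  simp [subset_compl_iff_disjoint_right, disjoint_iff_inter_eq_empty, and_comm]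

end PowersetCard

theorem Nat.choose_lt_choose_of_lt_s13 {n N S : ℕ} (hS : 1 ≤ S) (hSN : S ≤ N) (hnN : n < N) :
    n.choose S < N.choose S := by
  obtain ⟨M, rfl⟩ : ∃ M, N = M + 1 := ⟨N - 1, by omega⟩
  obtain ⟨s, rfl⟩ : ∃ s, S = s + 1 := ⟨S - 1, by omega⟩
  rw [choose_succ_succ']
  have := choose_le_choose (s + 1) (Nat.le_of_lt_succ hnN)
  have := choose_pos (Nat.le_of_succ_le_succ hSN)
  omega

/-- The two terms on the left are the means of `∑_{n ∈ L} w n` over the clean and the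
contaminated `S`-subsets, where `a = ∑_A w`, `b = ∑_{Aᶜ} w` and `m` counts the contaminated
subsets. -/
theorem clean_sub_contaminated_mean_eq {N K S m : ℕ} (hK : 1 ≤ K) (hS : 1 ≤ S)
    (hSNK : S ≤ N - K) (hm : m + (N - K).choose S = N.choose S) (a b : ℝ) :
    ((N - K).choose S : ℝ)⁻¹ * ((N - K - 1).choose (S - 1) * b)
        - (m : ℝ)⁻¹ * ((N - 1).choose (S - 1) * (a + b) - (N - K - 1).choose (S - 1) * b)
      = -((N - 1).choose (S - 1) / m * (a - K / (N - K : ℕ) * b)) := by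
  have hclean : (N - K - 1 + 1) * (N - K - 1).choose (S - 1) = (N - K).choose S * S := by
    rw [Nat.add_one_mul_choose_eq]; congr <;> omega
  have hall : (N - 1 + 1) * (N - 1).choose (S - 1) = N.choose S * S := by
    rw [Nat.add_one_mul_choose_eq]; congr <;> omega
  rw [Nat.sub_add_cancel (by omega : 1 ≤ N - K)] at hclean
  rw [Nat.sub_add_cancel (by omega : 1 ≤ N)] at hall
  have hNK : N - K + K = N := by omega
  have hcc := Nat.choose_pos hSNK
  have hm0 : m ≠ 0 := by
    have := Nat.choose_lt_choose_of_lt_s13 hS (by omega : S ≤ N) (by omega : N - K < N)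
    omega
  have hNK0 : N - K ≠ 0 := by omega
  rify at hclean hall hm hNK hcc hm0 hNK0
  field_simp
  linear_combination ((N - K - 1).choose (S - 1) * b * (N - K : ℕ) : ℝ) * hm
    + (b * N.choose S : ℝ) * hclean - ((N - 1).choose (S - 1) * b * (N - K).choose S : ℝ) * hNK
    - (b * (N - K).choose S : ℝ) * hall

theorem graphsac_corollary1_lower_bound_general {N C K S : ℕ}
    (hK : 1 ≤ K) (hS : 1 ≤ S) (hSNK : S ≤ N - K)
    (A : Finset (Fin N)) (hA : A.card = K)
    (y : Fin N → Fin C → ℝ)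
    (hy : ∀ n, ∃ c : Fin C, y n = Pi.single c 1)
    (Y : Finset (Fin N) → Matrix (Fin N) (Fin C) ℝ)
    (hY : ∀ L, Y L = Matrix.of fun n c => if n ∈ L then y n c else 0)
    (H : Matrix (Fin N) (Fin N) ℝ)
    (g : Finset (Fin N) → Matrix (Fin N) (Fin C) ℝ)
    (hg : ∀ L, g L = H * Y L)
    (LS LbarS LbarcS : Finset (Finset (Fin N)))
    (hLS : LS = Finset.powersetCard S (Finset.univ : Finset (Fin N)))
    (hLbarS : LbarS = LS.filter (fun L => L ∩ A = ∅))
    (hLbarcS : LbarcS = LS \ LbarS)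
    (PN PA : Matrix (Fin N) (Fin C) ℝ)
    (hPN : PN = ((LbarS.card : ℝ))⁻¹ • ∑ L ∈ LbarS, g L)
    (hPA : PA = ((LbarcS.card : ℝ))⁻¹ • ∑ L ∈ LbarcS, g L) :
    entryL1 (PN - PA) ≥
      (((N - 1).choose (S - 1) : ℝ) / (LbarcS.card : ℝ)) *
        |(∑ n ∈ A, ∑ i, H i n) -
          ((K : ℝ) / ((N - K : ℕ) : ℝ)) * ∑ n ∈ Aᶜ, ∑ i, H i n| := by
  set w : Fin N → ℝ := fun n => ∑ i, H i n
  have hgL (L : Finset (Fin N)) : Matrix.entrySum (g L) = ∑ n ∈ L, w n := by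
    have hrow (n : Fin N) : ∑ c, Y L n c = if n ∈ L then 1 else 0 := by
      obtain ⟨c, hc⟩ := hy n
      split_ifs <;> simp [*]
    simp only [hg, Matrix.entrySum_mul, hrow, mul_ite, mul_one, mul_zero, sum_ite_mem, univ_inter,
      w]
  have hclean : LbarS = powersetCard S Aᶜ := by
    rw [hLbarS, hLS, filter_inter_eq_empty_powersetCard_univ]
  have hsub : LbarS ⊆ LS := hLbarS ▸ filter_subset _ _
  have hAc : #Aᶜ = N - K := by rw [card_compl, hA, Fintype.card_fin]
  have hcard : #LbarcS + (N - K).choose S = N.choose S := by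
    rw [← hAc, ← card_powersetCard, ← hclean, hLbarcS, card_sdiff_add_card_eq_card hsub, hLS,
      card_powersetCard, card_univ, Fintype.card_fin]
  have hsum_clean : ∑ L ∈ LbarS, ∑ n ∈ L, w n = (N - K - 1).choose (S - 1) * ∑ n ∈ Aᶜ, w n := by
    rw [hclean, sum_powersetCard_sum _ hS, hAc, nsmul_eq_mul]
  have hsum_all :
      ∑ L ∈ LS, ∑ n ∈ L, w n = (N - 1).choose (S - 1) * (∑ n ∈ A, w n + ∑ n ∈ Aᶜ, w n) := by
    rw [hLS, sum_powersetCard_sum _ hS, card_univ, Fintype.card_fin, sum_add_sum_compl,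
      nsmul_eq_mul]
  have hmean : Matrix.entrySum (PN - PA) = -((N - 1).choose (S - 1) / #LbarcS *
      (∑ n ∈ A, w n - K / (N - K : ℕ) * ∑ n ∈ Aᶜ, w n)) := by
    simp only [hPN, hPA, map_sub, map_smul, map_sum, hgL, smul_eq_mul]
    rw [hLbarcS, sum_sdiff_eq_sub hsub, ← hLbarcS, hsum_all, hsum_clean, hclean,
      card_powersetCard, hAc]
    exact clean_sub_contaminated_mean_eq hK hS hSNK hcard _ _
  have hcoef : (0 : ℝ) ≤ (N - 1).choose (S - 1) / #LbarcS := by positivity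
  rw [ge_iff_le, ← abs_of_nonneg hcoef, ← abs_mul, ← abs_neg, ← hmean]
  exact abs_entrySum_le_entryL1 _

/-- For the diffusion-based SSL model with nonnegative diffusion columns and
one-hot labels, the reverse triangle inequality yields the lower bound
`‖P_N − P_A‖₁ ≥ (f_A/|L̄ᶜ_S|) · |Σ_{n'∈A} ‖h_{n'}‖₁ − (K/(N−K))·Σ_{n∉A} ‖h_n‖₁|`,
where `f_A = C(N−1, S−1)` and `‖h_n‖₁` is the sum of the entries of the `n`-th
column of `H`. -/
theorem graphsac_corollary1_lower_bound {N C K S : ℕ}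
    (hK : 1 ≤ K) (hS : 1 ≤ S) (hSNK : S ≤ N - K)
    (A : Finset (Fin N)) (hA : A.card = K)
    (y : Fin N → Fin C → ℝ)
    (hy : ∀ n, ∃ c : Fin C, y n = Pi.single c 1)
    (Y : Finset (Fin N) → Matrix (Fin N) (Fin C) ℝ)
    (hY : ∀ L, Y L = Matrix.of fun n c => if n ∈ L then y n c else 0)
    (H : Matrix (Fin N) (Fin N) ℝ)
    (hH : ∀ i n, 0 ≤ H i n)
    (g : Finset (Fin N) → Matrix (Fin N) (Fin C) ℝ)
    (hg : ∀ L, g L = H * Y L)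
    (LS LbarS LbarcS : Finset (Finset (Fin N)))
    (hLS : LS = Finset.powersetCard S (Finset.univ : Finset (Fin N)))
    (hLbarS : LbarS = LS.filter (fun L => L ∩ A = ∅))
    (hLbarcS : LbarcS = LS \ LbarS)
    (PN PA : Matrix (Fin N) (Fin C) ℝ)
    (hPN : PN = ((LbarS.card : ℝ))⁻¹ • ∑ L ∈ LbarS, g L)
    (hPA : PA = ((LbarcS.card : ℝ))⁻¹ • ∑ L ∈ LbarcS, g L) :
    entryL1 (PN - PA) ≥
      (((N - 1).choose (S - 1) : ℝ) / (LbarcS.card : ℝ)) *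
        |(∑ n ∈ A, ∑ i, H i n) -
          ((K : ℝ) / ((N - K : ℕ) : ℝ)) * ∑ n ∈ Aᶜ, ∑ i, H i n| :=
  graphsac_corollary1_lower_bound_general hK hS hSNK A hA y hy Y hY H g hg LS LbarS LbarcS hLS
    hLbarS hLbarcS PN PA hPN hPA
end
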